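/- arXiv:2004.03419 — 3 statements merged into one kernel-verified Lean document; each statement's English description precedes it below -/
import Mathlib

section
/- (Martingale characterization via small conditional increments.) Let (Ω, 𝒜, (ℱ_t), P) be a filtered probability space, T > 0, and let X : [0,T] × Ω → ℝ be an adapted process such that X_t is integrable for each t and t ↦ X_t is continuous in L¹ (i.e. E[|X_s − X_t|] → 0 as s → t). Suppose that for every s ∈ [0,T) and every ε > 0 there exists δ > 0 such that E[|E[X_{s+h} − X_s | ℱ_s]|] ≤ ε h for all h ∈ (0, δ) with s + h ≤ T. Then X is a martingale: for all 0 ≤ s ≤ t ≤ T, E[X_t | ℱ_s] = X_s almost surely. -/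
/-! Fix `s` and let `g u = E|E[X_u − X_s | ℱ_s]|`. By the triangle inequality and the
contractivity of conditional expectation in `L¹`, `g` is continuous wherever `X` is
`L¹`-continuous, and by the tower property `g z ≤ g x + E|E[X_z − X_x | ℱ_x]|` for `s ≤ x ≤ z`.
The hypothesis therefore says that the upper right Dini derivative of `g` is nonpositive on
`[s, t)`, so `g t ≤ g s = 0`, i.e. `E[X_t − X_s | ℱ_s] = 0` almost surely. -/

open MeasureTheory Set Filter Topology

theorem image_le_of_forall_eventually_le_add_mul {f : ℝ → ℝ} {a b : ℝ}
    (hf : ContinuousOn f (Icc a b)) (hab : a ≤ b)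
    (h : ∀ x ∈ Ico a b, ∀ ε > 0, ∀ᶠ z in 𝓝[>] x, f z ≤ f x + ε * (z - x)) :
    f b ≤ f a := by
  have hε : ∀ ε > 0, f b ≤ f a + ε * (b - a) := by
    intro ε hε
    refine image_le_of_liminf_slope_right_le_deriv_boundary hf (B := fun u => f a + ε * (u - a))
      (B' := fun _ => ε) (by simp) (by fun_prop)
      (fun x _ => (((hasDerivAt_id x).sub_const a).const_mul ε).const_add (f a)
        |>.hasDerivWithinAt.congr_deriv (by simp))
      (fun x hx r hr => Eventually.frequently ?_) (right_mem_Icc.2 hab)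
    filter_upwards [h x hx ε hε, self_mem_nhdsWithin] with z hz (hxz : x < z)
    rw [slope_def_field, div_lt_iff₀ (sub_pos.2 hxz)]
    nlinarith
  have hlim : Tendsto (fun ε => f a + ε * (b - a)) (𝓝[>] 0) (𝓝 (f a)) :=
    ((by fun_prop : Continuous fun ε : ℝ => f a + ε * (b - a)).tendsto' 0 (f a)
      (by simp)).mono_left nhdsWithin_le_nhds
  exact ge_of_tendsto hlim (eventually_nhdsWithin_of_forall hε)

section CondExp

variable {Ω : Type*} {m m₀ : MeasurableSpace Ω} {μ : Measure Ω} {f g : Ω → ℝ}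

theorem integral_abs_condExp_add_le (hf : Integrable f μ) (hg : Integrable g μ) :
    ∫ ω, |μ[f + g | m] ω| ∂μ ≤ ∫ ω, |μ[f | m] ω| ∂μ + ∫ ω, |μ[g | m] ω| ∂μ := by
  rw [← integral_add integrable_condExp.abs integrable_condExp.abs]
  refine integral_mono_ae integrable_condExp.abs
    (integrable_condExp.abs.add integrable_condExp.abs) ?_
  filter_upwards [condExp_add hf hg m] with ω hω
  rw [hω]
  exact abs_add_le _ _

theorem abs_integral_abs_condExp_sub_le (hf : Integrable f μ) (hg : Integrable g μ) :
    |∫ ω, |μ[f | m] ω| ∂μ - ∫ ω, |μ[g | m] ω| ∂μ| ≤ ∫ ω, |f ω - g ω| ∂μ := by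
  have one_side : ∀ {f g : Ω → ℝ}, Integrable f μ → Integrable g μ →
      ∫ ω, |μ[f | m] ω| ∂μ ≤ ∫ ω, |μ[g | m] ω| ∂μ + ∫ ω, |f ω - g ω| ∂μ := by
    intro f g hf hg
    calc ∫ ω, |μ[f | m] ω| ∂μ = ∫ ω, |μ[g + (f - g) | m] ω| ∂μ := by rw [add_sub_cancel]
      _ ≤ ∫ ω, |μ[g | m] ω| ∂μ + ∫ ω, |μ[f - g | m] ω| ∂μ :=
        integral_abs_condExp_add_le hg (hf.sub hg)
      _ ≤ ∫ ω, |μ[g | m] ω| ∂μ + ∫ ω, |f ω - g ω| ∂μ :=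
        add_le_add le_rfl (integral_abs_condExp_le _)
  have hsymm : ∫ ω, |g ω - f ω| ∂μ = ∫ ω, |f ω - g ω| ∂μ := by
    simp_rw [abs_sub_comm]
  rw [abs_sub_le_iff]
  constructor <;> linarith [one_side hf hg, one_side hg hf]

theorem integral_abs_condExp_le_of_le {m' : MeasurableSpace Ω} (hm : m ≤ m') (hm' : m' ≤ m₀)
    [SigmaFinite (μ.trim hm')] (f : Ω → ℝ) :
    ∫ ω, |μ[f | m] ω| ∂μ ≤ ∫ ω, |μ[f | m'] ω| ∂μ := by
  calc ∫ ω, |μ[f | m] ω| ∂μ = ∫ ω, |μ[μ[f | m'] | m] ω| ∂μ := by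
        refine integral_congr_ae ?_
        filter_upwards [condExp_condExp_of_le (f := f) hm hm'] with ω hω
        rw [hω]
    _ ≤ ∫ ω, |μ[f | m'] ω| ∂μ := integral_abs_condExp_le _

theorem condExp_ae_eq_of_integral_abs_condExp_sub_eq_zero (hm : m ≤ m₀)
    [SigmaFinite (μ.trim hm)] (hf : Integrable f μ) (hg : Integrable g μ)
    (hgm : StronglyMeasurable[m] g) (h : ∫ ω, |μ[f - g | m] ω| ∂μ = 0) :
    μ[f | m] =ᵐ[μ] g := by
  have hzero : (fun ω => |μ[f - g | m] ω|) =ᵐ[μ] 0 :=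
    (integral_eq_zero_iff_of_nonneg (fun _ => abs_nonneg _) integrable_condExp.abs).1 h
  filter_upwards [hzero, condExp_sub hf hg m] with ω hω hsub
  rw [condExp_of_stronglyMeasurable hm hgm hg] at hsub
  simp only [Pi.zero_apply, abs_eq_zero, hsub, Pi.sub_apply] at hω
  linarith

end CondExp

section Increments

variable {Ω ι : Type*} {m₀ : MeasurableSpace Ω} {μ : Measure Ω} {X : ι → Ω → ℝ}

theorem continuousWithinAt_integral_abs_condExp_sub [TopologicalSpace ι] {m : MeasurableSpace Ω}
    {Y : Ω → ℝ} {S : Set ι} {j : ι} (hX : ∀ i, Integrable (X i) μ) (hY : Integrable Y μ)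
    (hXj : Tendsto (fun i => ∫ ω, |X i ω - X j ω| ∂μ) (𝓝[S] j) (𝓝 0)) :
    ContinuousWithinAt (fun i => ∫ ω, |μ[X i - Y | m] ω| ∂μ) S j := by
  refine tendsto_sub_nhds_zero_iff.1 (squeeze_zero_norm (fun i => ?_) hXj)
  simpa only [Real.norm_eq_abs, Pi.sub_apply, sub_sub_sub_cancel_right] using
    abs_integral_abs_condExp_sub_le (m := m) ((hX i).sub hY) ((hX j).sub hY)

theorem integral_abs_condExp_sub_le_add [Preorder ι] (ℱ : Filtration ι m₀)
    [SigmaFiniteFiltration μ ℱ] (hX : ∀ i, Integrable (X i) μ) {i j k : ι} (hij : i ≤ j) :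
    ∫ ω, |μ[X k - X i | ℱ i] ω| ∂μ
      ≤ ∫ ω, |μ[X j - X i | ℱ i] ω| ∂μ + ∫ ω, |μ[X k - X j | ℱ j] ω| ∂μ := by
  calc ∫ ω, |μ[X k - X i | ℱ i] ω| ∂μ
      = ∫ ω, |μ[(X j - X i) + (X k - X j) | ℱ i] ω| ∂μ := by rw [sub_add_sub_cancel']
    _ ≤ ∫ ω, |μ[X j - X i | ℱ i] ω| ∂μ + ∫ ω, |μ[X k - X j | ℱ i] ω| ∂μ :=
      integral_abs_condExp_add_le ((hX j).sub (hX i)) ((hX k).sub (hX j))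
    _ ≤ ∫ ω, |μ[X j - X i | ℱ i] ω| ∂μ + ∫ ω, |μ[X k - X j | ℱ j] ω| ∂μ :=
      add_le_add le_rfl (integral_abs_condExp_le_of_le (ℱ.mono hij) (ℱ.le j) _)

end Increments

theorem stmt_10_general
    {Ω : Type*} {m : MeasurableSpace Ω} (P : Measure Ω) [IsProbabilityMeasure P]
    (ℱ : MeasureTheory.Filtration ℝ m)
    (T : ℝ) (X : ℝ → Ω → ℝ)
    (hadapted : MeasureTheory.Adapted ℱ X)
    (hint : ∀ t : ℝ, Integrable (X t) P)
    (hL1cont : ∀ t ∈ Set.Icc (0:ℝ) T,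
      Filter.Tendsto (fun s => ∫ ω, |X s ω - X t ω| ∂P) (𝓝[Set.Icc (0:ℝ) T] t) (𝓝 0))
    (hsmall : ∀ s ∈ Set.Ico (0:ℝ) T, ∀ ε > (0:ℝ), ∃ δ > (0:ℝ),
      ∀ h ∈ Set.Ioo (0:ℝ) δ, s + h ≤ T →
        ∫ ω, |(P[(fun ω' => X (s + h) ω' - X s ω') | ℱ s]) ω| ∂P ≤ ε * h) :
    ∀ s t : ℝ, 0 ≤ s → s ≤ t → t ≤ T → P[X t | ℱ s] =ᵐ[P] X s := by
  intro s t hs hst htT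
  set g : ℝ → ℝ := fun u => ∫ ω, |P[X u - X s | ℱ s] ω| ∂P
  have hcont : ContinuousOn g (Icc s t) := fun v hv =>
    continuousWithinAt_integral_abs_condExp_sub hint (hint s)
      ((hL1cont v ⟨hs.trans hv.1, hv.2.trans htT⟩).mono_left
        (nhdsWithin_mono v (Icc_subset_Icc hs htT)))
  have hslope : ∀ x ∈ Ico s t, ∀ ε > 0, ∀ᶠ z in 𝓝[>] x, g z ≤ g x + ε * (z - x) := by
    intro x hx ε hε
    obtain ⟨δ, hδ, hδbound⟩ := hsmall x ⟨hs.trans hx.1, hx.2.trans_le htT⟩ ε hε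
    filter_upwards [Ioo_mem_nhdsGT (lt_min (lt_add_of_pos_right x hδ) hx.2)] with z hz
    have hincr := hδbound (z - x) ⟨sub_pos.2 hz.1, by linarith [hz.2.trans_le (min_le_left _ _)]⟩
      (by linarith [hz.2.trans_le (min_le_right _ _)])
    rw [add_sub_cancel] at hincr
    exact (integral_abs_condExp_sub_le_add ℱ hint hx.1).trans (add_le_add le_rfl hincr)
  have hgs : g s = 0 := by simp [g, sub_self, condExp_zero]
  have hgt : g t = 0 := le_antisymm (hgs ▸ image_le_of_forall_eventually_le_add_mul hcont hst hslope)
    (integral_nonneg fun _ => abs_nonneg _)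
  exact condExp_ae_eq_of_integral_abs_condExp_sub_eq_zero (ℱ.le s) (hint t) (hint s)
    (hadapted s).stronglyMeasurable hgt

/-- Martingale characterization via small conditional increments: an
adapted, integrable, `L¹`-continuous process whose conditional increments satisfy
`E[|E[X_{s+h} − X_s | ℱ_s]|] ≤ ε h` for small `h` is a martingale on `[0,T]`. -/
theorem stmt_10
    {Ω : Type*} {m : MeasurableSpace Ω} (P : Measure Ω) [IsProbabilityMeasure P]
    (ℱ : MeasureTheory.Filtration ℝ m)
    (T : ℝ) (hT : 0 < T) (X : ℝ → Ω → ℝ)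
    (hadapted : MeasureTheory.Adapted ℱ X)
    (hint : ∀ t : ℝ, Integrable (X t) P)
    (hL1cont : ∀ t ∈ Set.Icc (0:ℝ) T,
      Filter.Tendsto (fun s => ∫ ω, |X s ω - X t ω| ∂P) (𝓝[Set.Icc (0:ℝ) T] t) (𝓝 0))
    (hsmall : ∀ s ∈ Set.Ico (0:ℝ) T, ∀ ε > (0:ℝ), ∃ δ > (0:ℝ),
      ∀ h ∈ Set.Ioo (0:ℝ) δ, s + h ≤ T →
        ∫ ω, |(P[(fun ω' => X (s + h) ω' - X s ω') | ℱ s]) ω| ∂P ≤ ε * h) :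
    ∀ s t : ℝ, 0 ≤ s → s ≤ t → t ≤ T → P[X t | ℱ s] =ᵐ[P] X s :=
  stmt_10_general P ℱ T X hadapted hint hL1cont hsmall
end

section
/- (A pathological function of bounded variation.) There exists a continuous function f : [0,1] → [0,∞) with f(0) = 0 such that f has bounded total variation on [0,1], f(h)/h → 0 as h → 0+, and yet limsup_{h → 0+} TV(f)_{0,h}/h = ∞ (in particular TV(f)_{0,h}/h is unbounded as h → 0+). -/
/-!
On `[2^{-(n+1)}, 2^{-n}]` place a row of `(n+1)^3` tents of height `2^{-(n+1)}/(n+1)^2`.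
There `f(x)/x ≤ 1/(n+1)^2`, while this row alone contributes `2(n+1)^3` times the height,
i.e. `(n+1) 2^{-n}`, to the variation of `f` on `[0, 2^{-n}]`. These contributions are summable,
and each row is the difference of two nondecreasing staircases, so `f` is a difference of two
bounded nondecreasing functions.
-/

open Set Filter Topology

noncomputable def ramp (a w x : ℝ) : ℝ := max 0 (min 1 ((x - a) / w))

section Ramp

variable {a a' w x : ℝ}

lemma ramp_nonneg (a w x : ℝ) : 0 ≤ ramp a w x := le_max_left _ _

lemma ramp_le_one (a w x : ℝ) : ramp a w x ≤ 1 := max_le zero_le_one (min_le_left _ _)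

lemma ramp_of_le (hw : 0 ≤ w) (hx : x ≤ a) : ramp a w x = 0 :=
  max_eq_left ((min_le_right _ _).trans (div_nonpos_of_nonpos_of_nonneg (by linarith) hw))

lemma ramp_of_add_le (hw : 0 < w) (hx : a + w ≤ x) : ramp a w x = 1 := by
  rw [ramp, min_eq_left ((le_div_iff₀ hw).2 (by linarith)), max_eq_right zero_le_one]

lemma ramp_monotone (hw : 0 ≤ w) : Monotone (ramp a w) := fun _ _ hxy => by
  unfold ramp; gcongr

lemma ramp_le_ramp_of_le (hw : 0 ≤ w) (h : a ≤ a') (x : ℝ) : ramp a' w x ≤ ramp a w x := by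
  unfold ramp; gcongr

lemma continuous_ramp (a w : ℝ) : Continuous (ramp a w) := by
  unfold ramp; fun_prop

end Ramp

section Sawtooth

open Finset

noncomputable def staircase (a w : ℝ) (k : ℕ) (x : ℝ) : ℝ :=
  ∑ j ∈ range k, ramp (a + 2 * j * w) w x

/-- `k` tents of height `1` and half-width `w` side by side on `[a, a + 2kw]`. -/
noncomputable def sawtooth (a w : ℝ) (k : ℕ) (x : ℝ) : ℝ :=
  staircase a w k x - staircase (a + w) w k x

variable {a w x : ℝ} {k : ℕ}

lemma staircase_monotone (hw : 0 ≤ w) : Monotone (staircase a w k) := fun _ _ hxy =>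
  sum_le_sum fun _ _ => ramp_monotone hw hxy

lemma continuous_staircase : Continuous (staircase a w k) :=
  continuous_finsetSum _ fun _ _ => continuous_ramp _ _

lemma staircase_nonneg : 0 ≤ staircase a w k x :=
  sum_nonneg fun _ _ => ramp_nonneg _ _ _

lemma staircase_le : staircase a w k x ≤ k :=
  (sum_le_sum fun _ _ => ramp_le_one _ _ _).trans (by simp)

lemma staircase_of_le (hw : 0 ≤ w) (hx : x ≤ a) : staircase a w k x = 0 :=
  sum_eq_zero fun j _ => ramp_of_le hw (by nlinarith [(Nat.cast_nonneg j : (0:ℝ) ≤ j)])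

lemma staircase_of_ge (hw : 0 < w) (hx : a + (2 * k - 1) * w ≤ x) : staircase a w k x = k := by
  rw [staircase, sum_congr rfl fun j hj => ramp_of_add_le hw ?_]
  · simp
  · have : (j : ℝ) + 1 ≤ k := by exact_mod_cast mem_range.1 hj
    nlinarith

lemma staircase_eq_of_mem (hw : 0 < w) {i : ℕ} (hik : i ≤ k)
    (h₁ : a + (2 * i - 1) * w ≤ x) (h₂ : x ≤ a + 2 * i * w) : staircase a w k x = i := by
  rw [staircase, ← sum_range_add_sum_Ico _ hik,
    sum_congr rfl fun j hj => ramp_of_add_le hw ?_,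
    sum_congr rfl fun j hj => ramp_of_le hw.le ?_]
  · simp
  · have : (i : ℝ) ≤ j := by exact_mod_cast (mem_Ico.1 hj).1
    nlinarith
  · have : (j : ℝ) + 1 ≤ i := by exact_mod_cast mem_range.1 hj
    nlinarith

lemma continuous_sawtooth : Continuous (sawtooth a w k) :=
  continuous_staircase.sub continuous_staircase

lemma sawtooth_nonneg (hw : 0 ≤ w) : 0 ≤ sawtooth a w k x :=
  sub_nonneg.2 <| sum_le_sum fun _ _ => ramp_le_ramp_of_le hw (by linarith) x

lemma sawtooth_le_one (hw : 0 ≤ w) : sawtooth a w k x ≤ 1 := by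
  rcases k with _ | k
  · simp [sawtooth, staircase]
  rw [sawtooth, staircase, staircase, sum_range_succ', sum_range_succ]
  -- the rise of tent `j + 1` starts after the fall of tent `j`, so the sum telescopes
  have := sum_le_sum fun j (_ : j ∈ range k) =>
    ramp_le_ramp_of_le hw (a := a + w + 2 * j * w) (a' := a + 2 * ↑(j + 1) * w)
      (by push_cast; linarith) x
  linarith [ramp_le_one (a + 2 * ↑(0 : ℕ) * w) w x, ramp_nonneg (a + w + 2 * k * w) w x]

lemma sawtooth_of_le (hw : 0 ≤ w) (hx : x ≤ a) : sawtooth a w k x = 0 := by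
  rw [sawtooth, staircase_of_le hw hx, staircase_of_le hw (by linarith), sub_self]

lemma sawtooth_of_ge (hw : 0 < w) (hx : a + 2 * k * w ≤ x) : sawtooth a w k x = 0 := by
  rw [sawtooth, staircase_of_ge hw (by linarith), staircase_of_ge hw (by linarith), sub_self]

lemma sawtooth_node (hw : 0 < w) {i : ℕ} (hi : i ≤ k) : sawtooth a w k (a + 2 * i * w) = 0 := by
  rw [sawtooth, staircase_eq_of_mem hw hi (by linarith) le_rfl,
    staircase_eq_of_mem hw hi (by linarith) (by linarith), sub_self]

lemma sawtooth_peak (hw : 0 < w) {i : ℕ} (hi : i < k) :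
    sawtooth a w k (a + (2 * i + 1) * w) = 1 := by
  rw [sawtooth, staircase_eq_of_mem hw (i := i + 1) hi (by push_cast; linarith)
    (by push_cast; linarith), staircase_eq_of_mem hw hi.le (by linarith) (by linarith)]
  push_cast; ring

end Sawtooth

section Variation

open Finset

variable {α E : Type*} [LinearOrder α]

lemma eVariationOn_sub_le [SeminormedAddCommGroup E] (f g : α → E) (s : Set α) :
    eVariationOn (f - g) s ≤ eVariationOn f s + eVariationOn g s := by
  refine iSup_le fun ⟨n, u, hu, us⟩ => ?_
  calc ∑ i ∈ range n, edist ((f - g) (u (i + 1))) ((f - g) (u i))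
      ≤ ∑ i ∈ range n, (edist (f (u (i + 1))) (f (u i)) + edist (g (u (i + 1))) (g (u i))) :=
        sum_le_sum fun i _ => by
          simpa [sub_eq_add_neg] using
            edist_add_add_le (f (u (i + 1))) (-g (u (i + 1))) (f (u i)) (-g (u i))
    _ = _ := sum_add_distrib
    _ ≤ _ := add_le_add (eVariationOn.sum_le hu us) (eVariationOn.sum_le hu us)

lemma BoundedVariationOn.sub [SeminormedAddCommGroup E] {f g : α → E} {s : Set α}
    (hf : BoundedVariationOn f s) (hg : BoundedVariationOn g s) : BoundedVariationOn (f - g) s :=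
  ((eVariationOn_sub_le f g s).trans_lt (ENNReal.add_lt_top.2 ⟨hf.lt_top, hg.lt_top⟩)).ne

lemma Monotone.boundedVariationOn_Icc {f : α → ℝ} (hf : Monotone f) (a b : α) :
    BoundedVariationOn f (Icc a b) := by
  have := (hf.monotoneOn univ).eVariationOn_eq (mem_univ a) (mem_univ b)
  rw [univ_inter] at this
  simp [BoundedVariationOn, this]

lemma ofReal_le_eVariationOn_const_mul_sawtooth {a w c : ℝ} {k : ℕ} (hw : 0 < w) (hc : 0 ≤ c) :
    ENNReal.ofReal (2 * k * c) ≤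
      eVariationOn (fun x => c * sawtooth a w k x) (Icc a (a + 2 * k * w)) := by
  set u : ℕ → ℝ := fun i => a + i * w
  have hu : Monotone u := fun i j hij => by simp only [u]; gcongr
  have hmem : ∀ i ≤ 2 * k, u i ∈ Icc a (a + 2 * k * w) := fun i hi => by
    have : (i : ℝ) ≤ 2 * k := by exact_mod_cast hi
    constructor <;> simp only [u] <;> nlinarith [(Nat.cast_nonneg i : (0 : ℝ) ≤ i)]
  have hstep : ∀ i < 2 * k,
      edist (c * sawtooth a w k (u (i + 1))) (c * sawtooth a w k (u i)) = ENNReal.ofReal c := by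
    intro i hi
    obtain ⟨j, rfl | rfl⟩ := Nat.even_or_odd' i
    · have hnode : u (2 * j) = a + 2 * j * w := by simp only [u]; push_cast; ring
      have hpeak : u (2 * j + 1) = a + (2 * j + 1) * w := by simp only [u]; push_cast; ring
      rw [hnode, hpeak, sawtooth_node hw (by omega), sawtooth_peak hw (by omega),
        edist_dist, Real.dist_eq]
      simp [abs_of_nonneg hc]
    · have hpeak : u (2 * j + 1) = a + (2 * j + 1) * w := by simp only [u]; push_cast; ring
      have hnode : u (2 * j + 1 + 1) = a + 2 * ↑(j + 1) * w := by simp only [u]; push_cast; ring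
      rw [hnode, hpeak, sawtooth_node hw (by omega), sawtooth_peak hw (by omega),
        edist_dist, Real.dist_eq]
      simp [abs_of_nonneg hc]
  calc ENNReal.ofReal (2 * k * c) = ∑ i ∈ range (2 * k), ENNReal.ofReal c := by
        rw [sum_const, card_range, nsmul_eq_mul, ENNReal.ofReal_mul (by positivity)]
        norm_cast
    _ = ∑ i ∈ range (2 * k), edist (c * sawtooth a w k (u (i + 1))) (c * sawtooth a w k (u i)) :=
        sum_congr rfl fun i hi => (hstep i (mem_range.1 hi)).symm
    _ ≤ _ := eVariationOn.sum_le_of_monotoneOn_Iic (hu.monotoneOn _) hmem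

end Variation

namespace SpikyExample

def spikeCount (n : ℕ) : ℕ := (n + 1) ^ 3

noncomputable def spikeHeight (n : ℕ) : ℝ := (1 / 2) ^ (n + 1) / (n + 1) ^ 2

noncomputable def spikeHalfWidth (n : ℕ) : ℝ := (1 / 2) ^ (n + 1) / (2 * spikeCount n)

noncomputable def spikeGroup (n : ℕ) (x : ℝ) : ℝ :=
  spikeHeight n * sawtooth ((1 / 2) ^ (n + 1)) (spikeHalfWidth n) (spikeCount n) x

noncomputable def spiky (x : ℝ) : ℝ := ∑' n, spikeGroup n x

lemma spikeHeight_pos (n : ℕ) : 0 < spikeHeight n := by unfold spikeHeight; positivity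

lemma spikeHalfWidth_pos (n : ℕ) : 0 < spikeHalfWidth n := by
  unfold spikeHalfWidth spikeCount; positivity

lemma spikeGroup_end (n : ℕ) :
    (1 / 2 : ℝ) ^ (n + 1) + 2 * spikeCount n * spikeHalfWidth n = (1 / 2) ^ n := by
  unfold spikeHalfWidth spikeCount
  field_simp
  ring

lemma spikeCount_mul_spikeHeight (n : ℕ) :
    spikeCount n * spikeHeight n = (n + 1) * (1 / 2 : ℝ) ^ (n + 1) := by
  unfold spikeHeight spikeCount
  field_simp
  push_cast
  ring

lemma spikeGroup_nonneg (n : ℕ) (x : ℝ) : 0 ≤ spikeGroup n x :=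
  mul_nonneg (spikeHeight_pos n).le (sawtooth_nonneg (spikeHalfWidth_pos n).le)

lemma spikeGroup_le (n : ℕ) (x : ℝ) : spikeGroup n x ≤ spikeHeight n :=
  mul_le_of_le_one_right (spikeHeight_pos n).le (sawtooth_le_one (spikeHalfWidth_pos n).le)

lemma spikeGroup_eq_zero {n : ℕ} {x : ℝ} (hx : x ≤ (1 / 2) ^ (n + 1) ∨ (1 / 2) ^ n ≤ x) :
    spikeGroup n x = 0 := by
  rw [spikeGroup, mul_eq_zero]
  right
  rcases hx with hx | hx
  · exact sawtooth_of_le (spikeHalfWidth_pos n).le hx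
  · exact sawtooth_of_ge (spikeHalfWidth_pos n) ((spikeGroup_end n).trans_le hx)

lemma summable_spikeHeight : Summable spikeHeight := by
  refine (summable_geometric_two.comp_injective (add_left_injective 1)).of_nonneg_of_le
    (fun n => (spikeHeight_pos n).le) fun n => ?_
  unfold spikeHeight
  exact div_le_self (by positivity) (by nlinarith [(Nat.cast_nonneg n : (0 : ℝ) ≤ n)])

lemma spiky_eq_spikeGroup {n : ℕ} {x : ℝ} (hx : x ∈ Icc ((1 / 2) ^ (n + 1)) ((1 / 2) ^ n)) :
    spiky x = spikeGroup n x := by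
  refine tsum_eq_single n fun m hm => spikeGroup_eq_zero ?_
  rcases hm.lt_or_gt with h | h
  · exact .inl (hx.2.trans (pow_le_pow_of_le_one (by norm_num) (by norm_num) h))
  · exact .inr ((pow_le_pow_of_le_one (by norm_num) (by norm_num) h).trans hx.1)

lemma continuous_spiky : Continuous spiky :=
  continuous_tsum (fun _ => continuous_const.mul continuous_sawtooth) summable_spikeHeight
    fun n x => by rw [Real.norm_of_nonneg (spikeGroup_nonneg n x)]; exact spikeGroup_le n x

lemma spiky_nonneg (x : ℝ) : 0 ≤ spiky x := tsum_nonneg (spikeGroup_nonneg · x)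

lemma spiky_zero : spiky 0 = 0 := by
  simp [spiky, spikeGroup_eq_zero (.inl (by positivity))]

lemma summable_spikeHeight_mul_staircase (b : ℕ → ℝ) (x : ℝ) :
    Summable fun n => spikeHeight n * staircase (b n) (spikeHalfWidth n) (spikeCount n) x := by
  have hgeom : Summable fun m : ℕ => (m : ℝ) * (1 / 2 : ℝ) ^ m := by
    simpa using summable_pow_mul_geometric_of_norm_lt_one 1 (r := (1 / 2 : ℝ)) (by norm_num)
  have hbound : Summable fun n : ℕ => ((n + 1 : ℕ) : ℝ) * (1 / 2 : ℝ) ^ (n + 1) :=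
    (summable_nat_add_iff 1 (f := fun m : ℕ => (m : ℝ) * (1 / 2 : ℝ) ^ m)).2 hgeom
  refine hbound.of_nonneg_of_le
    (fun n => mul_nonneg (spikeHeight_pos n).le staircase_nonneg) fun n => ?_
  push_cast
  rw [← spikeCount_mul_spikeHeight, mul_comm (spikeCount n : ℝ)]
  exact mul_le_mul_of_nonneg_left staircase_le (spikeHeight_pos n).le

lemma monotone_tsum_spikeHeight_mul_staircase (b : ℕ → ℝ) :
    Monotone fun x => ∑' n, spikeHeight n * staircase (b n) (spikeHalfWidth n) (spikeCount n) x :=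
  fun x y hxy => (summable_spikeHeight_mul_staircase b x).tsum_le_tsum
    (fun n => mul_le_mul_of_nonneg_left (staircase_monotone (spikeHalfWidth_pos n).le hxy)
      (spikeHeight_pos n).le)
    (summable_spikeHeight_mul_staircase b y)

lemma boundedVariationOn_spiky (a b : ℝ) : BoundedVariationOn spiky (Icc a b) := by
  have hsplit : spiky =
      (fun x => ∑' n, spikeHeight n *
        staircase ((1 / 2) ^ (n + 1)) (spikeHalfWidth n) (spikeCount n) x) -
      (fun x => ∑' n, spikeHeight n *
        staircase ((1 / 2) ^ (n + 1) + spikeHalfWidth n) (spikeHalfWidth n) (spikeCount n) x) := by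
    funext x
    simp only [spiky, spikeGroup, sawtooth, mul_sub, Pi.sub_apply]
    exact (summable_spikeHeight_mul_staircase _ x).tsum_sub
      (summable_spikeHeight_mul_staircase _ x)
  rw [hsplit]
  exact ((monotone_tsum_spikeHeight_mul_staircase _).boundedVariationOn_Icc a b).sub
    ((monotone_tsum_spikeHeight_mul_staircase _).boundedVariationOn_Icc a b)

lemma ofReal_le_eVariationOn_spiky (n : ℕ) :
    ENNReal.ofReal ((n + 1) * (1 / 2) ^ n) ≤ eVariationOn spiky (Icc 0 ((1 / 2) ^ n)) := by
  have hgroup : EqOn spiky (spikeGroup n) (Icc ((1 / 2) ^ (n + 1)) ((1 / 2) ^ n)) :=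
    fun _ hx => spiky_eq_spikeGroup hx
  have hvar := ofReal_le_eVariationOn_const_mul_sawtooth (a := (1 / 2 : ℝ) ^ (n + 1))
    (spikeHalfWidth_pos n) (spikeHeight_pos n).le (k := spikeCount n)
  rw [spikeGroup_end, mul_assoc, spikeCount_mul_spikeHeight] at hvar
  calc ENNReal.ofReal ((n + 1) * (1 / 2) ^ n)
      = ENNReal.ofReal (2 * ((n + 1) * (1 / 2) ^ (n + 1))) := by congr 1; ring
    _ ≤ eVariationOn (spikeGroup n) (Icc ((1 / 2) ^ (n + 1)) ((1 / 2) ^ n)) := hvar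
    _ = eVariationOn spiky (Icc ((1 / 2) ^ (n + 1)) ((1 / 2) ^ n)) :=
      (eVariationOn.eq_of_eqOn hgroup).symm
    _ ≤ eVariationOn spiky (Icc 0 ((1 / 2) ^ n)) :=
      eVariationOn.mono _ (Icc_subset_Icc_left (by positivity))

lemma spiky_le {n : ℕ} {x : ℝ} (hx : x ∈ Icc ((1 / 2) ^ (n + 1)) ((1 / 2) ^ n)) :
    spiky x ≤ x / (n + 1) ^ 2 := by
  rw [spiky_eq_spikeGroup hx]
  exact (spikeGroup_le n x).trans (div_le_div_of_nonneg_right hx.1 (by positivity))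

lemma exists_mem_Icc_half_pow {N : ℕ} {x : ℝ} (hx : 0 < x) (hxN : x ≤ (1 / 2) ^ N) :
    ∃ n ≥ N, x ∈ Icc ((1 / 2 : ℝ) ^ (n + 1)) ((1 / 2) ^ n) := by
  have h1 : (1 : ℝ) ≤ x⁻¹ := by
    rw [one_le_inv₀ hx]; exact hxN.trans (pow_le_one₀ (by norm_num) (by norm_num))
  obtain ⟨n, hn, hn'⟩ := exists_nat_pow_near h1 (by norm_num : (1 : ℝ) < 2)
  refine ⟨n, ?_, ?_, ?_⟩
  · have : (2 : ℝ) ^ N < 2 ^ (n + 1) := by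
      refine lt_of_le_of_lt ?_ hn'
      rw [le_inv_comm₀ (by positivity) hx, ← inv_pow, ← one_div]; exact hxN
    have := (pow_lt_pow_iff_right₀ (by norm_num : (1 : ℝ) < 2)).1 this
    omega
  · rw [one_div, inv_pow]; exact (inv_le_comm₀ hx (by positivity)).1 hn'.le
  · rw [one_div, inv_pow]; exact (le_inv_comm₀ (by positivity) hx).1 hn

lemma spiky_div_le {N : ℕ} {x : ℝ} (hx : 0 < x) (hxN : x ≤ (1 / 2) ^ N) :
    spiky x / x ≤ 1 / (N + 1) := by
  obtain ⟨n, hnN, hxn⟩ := exists_mem_Icc_half_pow hx hxN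
  have hN : (N : ℝ) + 1 ≤ n + 1 := by exact_mod_cast Nat.succ_le_succ hnN
  rw [div_le_iff₀ hx]
  calc spiky x ≤ x / (n + 1) ^ 2 := spiky_le hxn
    _ ≤ x / (N + 1) := div_le_div_of_nonneg_left hx.le (by positivity) (by nlinarith)
    _ = 1 / (N + 1) * x := by ring

lemma tendsto_spiky_div : Tendsto (fun h => spiky h / h) (𝓝[>] 0) (𝓝 0) := by
  rw [Metric.tendsto_nhdsWithin_nhds]
  intro ε hε
  obtain ⟨N, hN⟩ := exists_nat_one_div_lt hε
  refine ⟨(1 / 2) ^ N, by positivity, fun x (hx : 0 < x) hxN => ?_⟩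
  rw [Real.dist_0_eq_abs, abs_of_nonneg hx.le] at hxN
  rw [Real.dist_0_eq_abs, abs_of_nonneg (div_nonneg (spiky_nonneg x) hx.le)]
  exact (spiky_div_le hx hxN.le).trans_lt hN

lemma exists_eVariationOn_spiky_div_gt (C η : ℝ) (hη : 0 < η) :
    ∃ h ∈ Ioo (0 : ℝ) η, C < (eVariationOn spiky (Icc 0 h)).toReal / h := by
  obtain ⟨n₀, hn₀⟩ := exists_pow_lt_of_lt_one hη (by norm_num : (1 / 2 : ℝ) < 1)
  obtain ⟨M, hM⟩ := exists_nat_gt C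
  set n := max n₀ M
  have hpos : (0 : ℝ) < (1 / 2) ^ n := by positivity
  refine ⟨(1 / 2) ^ n, ⟨hpos, (pow_le_pow_of_le_one (by norm_num) (by norm_num)
    (le_max_left n₀ M)).trans_lt hn₀⟩, ?_⟩
  have hfin : eVariationOn spiky (Icc 0 ((1 / 2) ^ n)) ≠ ⊤ := boundedVariationOn_spiky _ _
  have hlow := (ENNReal.ofReal_le_iff_le_toReal hfin).1 (ofReal_le_eVariationOn_spiky n)
  rw [lt_div_iff₀ hpos]
  have hMn : (M : ℝ) ≤ n := by exact_mod_cast le_max_right n₀ M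
  nlinarith

end SpikyExample

/-- A pathological function of bounded variation: there is a continuous
nonnegative `f : [0,1] → [0,∞)` with `f(0) = 0`, of bounded total variation on `[0,1]`,
with `f(h)/h → 0` as `h → 0+`, and yet `TV(f)_{0,h}/h` unbounded as `h → 0+`
(i.e. `limsup_{h→0+} TV(f)_{0,h}/h = ∞`). -/
theorem stmt_12 :
    ∃ f : ℝ → ℝ,
      ContinuousOn f (Set.Icc 0 1) ∧
      f 0 = 0 ∧
      (∀ x ∈ Set.Icc (0:ℝ) 1, 0 ≤ f x) ∧
      eVariationOn f (Set.Icc 0 1) ≠ ⊤ ∧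
      Filter.Tendsto (fun h => f h / h) (𝓝[>] (0:ℝ)) (𝓝 0) ∧
      (∀ C : ℝ, ∀ η > (0:ℝ), ∃ h ∈ Set.Ioo (0:ℝ) η,
        (eVariationOn f (Set.Icc 0 h)).toReal / h > C) :=
  open SpikyExample in
  ⟨spiky, continuous_spiky.continuousOn, spiky_zero, fun x _ => spiky_nonneg x,
    boundedVariationOn_spiky 0 1, tendsto_spiky_div, exists_eVariationOn_spiky_div_gt⟩
end

section
/- (Mean-sense Fundamental Theorem of Stochastic Calculus, drift part.) Let (Ω, 𝒜, (ℱ_t), P) be a filtered probability space and T > 0. Let μ : [0,T] × Ω → ℝ be a jointly measurable adapted process with μ_u integrable for each u and t ↦ μ_t continuous in L¹ (i.e. E[|μ_s − μ_t|] → 0 as s → t). Let H : [0,T] × Ω → ℝ be a jointly measurable adapted process whose sample paths are almost surely continuous and which is uniformly bounded: |H_u(ω)| ≤ C for all u, ω. Then for each t ∈ [0,T), the random variables (1/h) E[∫_t^{t+h} (H_u − H_t) μ_u du | ℱ_t] converge to 0 in L¹ as h → 0+ (with t + h ≤ T). -/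
/-!
Conditional expectation is an `L¹` contraction, so it suffices to bound
`E|∫_t^{t+h} (H_u − H_t) μ_u du|`. Freezing `μ` at time `t`,
`|(H_u − H_t) μ_u| ≤ 2C |μ_u − μ_t| + |H_u − H_t| |μ_t|`. By Fubini the first term contributes
`2C · (1/h) ∫_t^{t+h} E|μ_u − μ_t| du`, an average of a function tending to `0` by
`L¹`-continuity; the second contributes `E[(1/h) ∫_t^{t+h} |H_u − H_t| du · |μ_t|]`, which tends
to `0` by continuity of the paths and dominated convergence with bound `2C |μ_t|`.
-/

open MeasureTheory Set Filter Topology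

lemma abs_mul_le_mul_abs_sub_add {a b c K : ℝ} (ha : |a| ≤ K) :
    |a * b| ≤ K * |b - c| + |a| * |c| := by
  have hb : |b| ≤ |b - c| + |c| := by simpa using abs_add_le (b - c) c
  calc |a * b| = |a| * |b| := abs_mul a b
    _ ≤ |a| * |b - c| + |a| * |c| := by nlinarith [abs_nonneg a]
    _ ≤ K * |b - c| + |a| * |c| := by gcongr

lemma nhdsGT_le_nhdsWithin_Icc {a b t : ℝ} (hat : a ≤ t) (htb : t < b) :
    𝓝[>] t ≤ 𝓝[Icc a b] t :=
  nhdsWithin_le_of_mem <|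
    mem_of_superset (Ioo_mem_nhdsGT htb) fun _ hu => ⟨hat.trans hu.1.le, hu.2.le⟩

lemma eventually_forall_Ioc_of_eventually_nhdsGT {p : ℝ → Prop} {t : ℝ}
    (hp : ∀ᶠ u in 𝓝[>] t, p u) : ∀ᶠ h in 𝓝[>] 0, ∀ u ∈ Ioc t (t + h), p u := by
  obtain ⟨b, hb, hsub⟩ := mem_nhdsGT_iff_exists_Ioo_subset.1 hp
  filter_upwards [Ioo_mem_nhdsGT (sub_pos.2 (mem_Ioi.1 hb))] with h hh u hu
  exact hsub ⟨hu.1, by linarith [hu.2, hh.2]⟩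

lemma eventually_integrableOn_Ioc_of_tendsto {f : ℝ → ℝ} {t c : ℝ}
    (hfm : AEStronglyMeasurable f) (hf : Tendsto f (𝓝[>] t) (𝓝 c)) :
    ∀ᶠ h in 𝓝[>] 0, IntegrableOn f (Ioc t (t + h)) := by
  have hbdd : ∀ᶠ u in 𝓝[>] t, ‖f u‖ < ‖c‖ + 1 :=
    hf.norm.eventually (eventually_lt_nhds (lt_add_one _))
  filter_upwards [eventually_forall_Ioc_of_eventually_nhdsGT hbdd] with h hh
  exact Measure.integrableOn_of_bounded measure_Ioc_lt_top.ne hfm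
    ((ae_restrict_iff' measurableSet_Ioc).2 (Eventually.of_forall fun u hu => (hh u hu).le))

lemma tendsto_intervalIntegral_div_of_tendsto_zero {f : ℝ → ℝ} {t : ℝ}
    (hf : Tendsto f (𝓝[>] t) (𝓝 0)) :
    Tendsto (fun h => (∫ u in t..t + h, f u) / h) (𝓝[>] 0) (𝓝 0) := by
  rw [Metric.tendsto_nhds]
  intro ε hε
  have hsmall : ∀ᶠ u in 𝓝[>] t, ‖f u‖ ≤ ε / 2 := by
    filter_upwards [Metric.tendsto_nhds.1 hf (ε / 2) (half_pos hε)] with u hu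
    simpa using hu.le
  filter_upwards [self_mem_nhdsWithin, eventually_forall_Ioc_of_eventually_nhdsGT hsmall]
    with h (hh : 0 < h) hfh
  have hint : ‖∫ u in t..t + h, f u‖ ≤ ε / 2 * h := by
    simpa [abs_of_pos hh] using intervalIntegral.norm_integral_le_of_norm_le_const
      (a := t) (b := t + h) fun u hu => hfh u (by rwa [uIoc_of_le (by linarith)] at hu)
  rw [dist_zero_right, norm_div, Real.norm_of_nonneg hh.le, div_lt_iff₀ hh]
  nlinarith

section Fubini

variable {α Ω : Type*} [MeasurableSpace α] {m : MeasurableSpace Ω}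
  {ρ : Measure α} {P : Measure Ω} [IsFiniteMeasure ρ] [SFinite P]

lemma abs_integral_mul_le {d f : α → ℝ} {c K : ℝ} (hd : AEStronglyMeasurable d ρ)
    (hdK : ∀ u, |d u| ≤ K) (hf : Integrable (fun u => f u - c) ρ) :
    |∫ u, d u * f u ∂ρ| ≤ K * ∫ u, |f u - c| ∂ρ + (∫ u, |d u| ∂ρ) * |c| := by
  have hd_int : Integrable (fun u => |d u|) ρ :=
    (Integrable.of_bound hd K (Eventually.of_forall hdK)).abs
  have hbound : Integrable (fun u => K * |f u - c| + |d u| * |c|) ρ :=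
    (hf.abs.const_mul K).add (hd_int.mul_const |c|)
  calc |∫ u, d u * f u ∂ρ| ≤ ∫ u, (K * |f u - c| + |d u| * |c|) ∂ρ :=
        norm_integral_le_of_norm_le (f := fun u => d u * f u) hbound
          (Eventually.of_forall fun u => abs_mul_le_mul_abs_sub_add (hdK u))
    _ = K * ∫ u, |f u - c| ∂ρ + (∫ u, |d u| ∂ρ) * |c| := by
        rw [integral_add (hf.abs.const_mul K) (hd_int.mul_const _), integral_const_mul,
          integral_mul_const]

lemma integral_abs_integral_mul_le {D f : α → Ω → ℝ} {g : Ω → ℝ} {K : ℝ}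
    (hD : Measurable (Function.uncurry D)) (hDK : ∀ u ω, |D u ω| ≤ K)
    (hf : Measurable (Function.uncurry f)) (hf_int : ∀ u, Integrable (f u) P)
    (hg : Integrable g P) (hfg : Integrable (fun u => ∫ ω, |f u ω - g ω| ∂P) ρ) :
    ∫ ω, |∫ u, D u ω * f u ω ∂ρ| ∂P ≤
      K * ∫ u, ∫ ω, |f u ω - g ω| ∂P ∂ρ + ∫ ω, (∫ u, |D u ω| ∂ρ) * |g ω| ∂P := by
  have hF : Integrable (fun p : α × Ω => f p.1 p.2 - g p.2) (ρ.prod P) := by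
    refine (integrable_prod_iff (f := fun p : α × Ω => f p.1 p.2 - g p.2)
      (hf.aestronglyMeasurable.sub hg.1.comp_snd)).2
      ⟨Eventually.of_forall fun u => (hf_int u).sub hg, ?_⟩
    simpa only [Real.norm_eq_abs] using hfg
  have hY : Integrable (fun ω => ∫ u, |f u ω - g ω| ∂ρ) P := hF.abs.integral_prod_right
  have hZ : Integrable (fun ω => (∫ u, |D u ω| ∂ρ) * |g ω|) P := by
    refine hg.abs.bdd_mul (c := K * ρ.real univ)
      (hD.abs.stronglyMeasurable.integral_prod_left).aestronglyMeasurable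
      (Eventually.of_forall fun ω => ?_)
    simpa using norm_integral_le_of_norm_le_const (μ := ρ)
      (Eventually.of_forall fun u => (by simpa using hDK u ω : ‖|D u ω|‖ ≤ K))
  calc ∫ ω, |∫ u, D u ω * f u ω ∂ρ| ∂P
      ≤ ∫ ω, (K * ∫ u, |f u ω - g ω| ∂ρ + (∫ u, |D u ω| ∂ρ) * |g ω|) ∂P := by
        refine integral_mono_of_nonneg (Eventually.of_forall fun ω => abs_nonneg _)
          ((hY.const_mul K).add hZ) ?_
        filter_upwards [hF.prod_left_ae] with ω hω
        exact abs_integral_mul_le (hD.of_uncurry_right).aestronglyMeasurable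
          (fun u => hDK u ω) hω
    _ = K * ∫ u, ∫ ω, |f u ω - g ω| ∂P ∂ρ + ∫ ω, (∫ u, |D u ω| ∂ρ) * |g ω| ∂P := by
        rw [integral_add (hY.const_mul K) hZ, integral_const_mul,
          integral_integral_swap (f := fun ω u => |f u ω - g ω|) hF.abs.swap]

end Fubini

lemma tendsto_integral_intervalIntegral_div_mul {Ω : Type*} {m : MeasurableSpace Ω}
    {P : Measure Ω} {D : ℝ → Ω → ℝ} {g : Ω → ℝ} {K t : ℝ}
    (hD : Measurable (Function.uncurry D)) (hDK : ∀ u ω, |D u ω| ≤ K) (hg : Integrable g P)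
    (hDt : ∀ᵐ ω ∂P, Tendsto (fun u => D u ω) (𝓝[>] t) (𝓝 0)) :
    Tendsto (fun h => ∫ ω, (∫ u in t..t + h, |D u ω|) / h * |g ω| ∂P) (𝓝[>] 0) (𝓝 0) := by
  have hlim := tendsto_integral_filter_of_dominated_convergence (μ := P) (l := 𝓝[>] (0 : ℝ))
    (F := fun h ω => (∫ u in t..t + h, |D u ω|) / h * |g ω|) (f := 0) (fun ω => K * |g ω|)
    ?meas ?bound (hg.abs.const_mul K) ?pointwise
  · simpa using hlim
  case meas =>
    filter_upwards [self_mem_nhdsWithin] with h (hh : 0 < h)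
    simp only [intervalIntegral.integral_of_le (by linarith : t ≤ t + h)]
    exact (((hD.comp measurable_swap).abs.stronglyMeasurable.integral_prod_right
      (ν := volume.restrict (Ioc t (t + h)))).measurable.div_const h).aestronglyMeasurable.mul
      hg.abs.1
  case bound =>
    filter_upwards [self_mem_nhdsWithin] with h (hh : 0 < h)
    refine Eventually.of_forall fun ω => ?_
    have hint : ‖∫ u in t..t + h, |D u ω|‖ ≤ K * h := by
      simpa [abs_of_pos hh] using intervalIntegral.norm_integral_le_of_norm_le_const
        (a := t) (b := t + h) fun u _ => (by simpa using hDK u ω : ‖|D u ω|‖ ≤ K)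
    rw [norm_mul, norm_div, Real.norm_of_nonneg hh.le, Real.norm_eq_abs (|g ω|), abs_abs]
    gcongr
    rwa [div_le_iff₀ hh]
  case pointwise =>
    filter_upwards [hDt] with ω hω
    simpa using (tendsto_intervalIntegral_div_of_tendsto_zero
      (by simpa using hω.abs)).mul_const |g ω|

lemma integral_abs_condExp_intervalIntegral_mul_le {Ω : Type*} (m₀ : MeasurableSpace Ω)
    {m : MeasurableSpace Ω} {P : Measure Ω} [SFinite P] {D f : ℝ → Ω → ℝ} {g : Ω → ℝ}
    {K t h : ℝ} (hh : 0 ≤ h) (hD : Measurable (Function.uncurry D)) (hDK : ∀ u ω, |D u ω| ≤ K)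
    (hf : Measurable (Function.uncurry f)) (hf_int : ∀ u, Integrable (f u) P)
    (hg : Integrable g P) (hfg : IntegrableOn (fun u => ∫ ω, |f u ω - g ω| ∂P) (Ioc t (t + h))) :
    ∫ ω, |P[fun ω' => ∫ u in t..t + h, D u ω' * f u ω' | m₀] ω| ∂P ≤
      K * (∫ u in t..t + h, ∫ ω, |f u ω - g ω| ∂P) +
        ∫ ω, (∫ u in t..t + h, |D u ω|) * |g ω| ∂P := by
  have : IsFiniteMeasure (volume.restrict (Ioc t (t + h))) :=
    isFiniteMeasure_restrict.2 measure_Ioc_lt_top.ne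
  refine (integral_abs_condExp_le _).trans ?_
  simp only [intervalIntegral.integral_of_le (le_add_of_nonneg_right hh)]
  exact integral_abs_integral_mul_le hD hDK hf hf_int hg hfg

lemma tendsto_integral_abs_condExp_intervalIntegral_mul_div {Ω : Type*} (m₀ : MeasurableSpace Ω)
    {m : MeasurableSpace Ω} {P : Measure Ω} [SFinite P] {D f : ℝ → Ω → ℝ} {g : Ω → ℝ} {K t : ℝ}
    (hD : Measurable (Function.uncurry D)) (hDK : ∀ u ω, |D u ω| ≤ K)
    (hDt : ∀ᵐ ω ∂P, Tendsto (fun u => D u ω) (𝓝[>] t) (𝓝 0))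
    (hf : Measurable (Function.uncurry f)) (hf_int : ∀ u, Integrable (f u) P)
    (hg : Integrable g P) (hfg : Tendsto (fun u => ∫ ω, |f u ω - g ω| ∂P) (𝓝[>] t) (𝓝 0)) :
    Tendsto (fun h => (∫ ω, |P[fun ω' => ∫ u in t..t + h, D u ω' * f u ω' | m₀] ω| ∂P) / h)
      (𝓝[>] 0) (𝓝 0) := by
  set ψ : ℝ → ℝ := fun u => ∫ ω, |f u ω - g ω| ∂P
  have hψ_meas : AEStronglyMeasurable ψ := by
    have hF : AEStronglyMeasurable (fun p : ℝ × Ω => f p.1 p.2 - g p.2) (volume.prod P) :=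
      hf.aestronglyMeasurable.sub hg.1.comp_snd
    simpa only [Real.norm_eq_abs] using hF.norm.integral_prod_right'
  have hψint : ∀ᶠ h in 𝓝[>] 0, IntegrableOn ψ (Ioc t (t + h)) :=
    eventually_integrableOn_Ioc_of_tendsto hψ_meas hfg
  have hlim : Tendsto (fun h => K * ((∫ u in t..t + h, ψ u) / h) +
      ∫ ω, (∫ u in t..t + h, |D u ω|) / h * |g ω| ∂P) (𝓝[>] 0) (𝓝 0) := by
    simpa using ((tendsto_intervalIntegral_div_of_tendsto_zero hfg).const_mul K).add
      (tendsto_integral_intervalIntegral_div_mul hD hDK hg hDt)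
  refine squeeze_zero' ?_ ?_ hlim
  · filter_upwards [self_mem_nhdsWithin] with h (hh : 0 < h)
    exact div_nonneg (integral_nonneg fun ω => abs_nonneg _) hh.le
  · filter_upwards [self_mem_nhdsWithin, hψint] with h (hh : 0 < h) hψh
    calc _ ≤ (K * (∫ u in t..t + h, ψ u) + ∫ ω, (∫ u in t..t + h, |D u ω|) * |g ω| ∂P) / h :=
          div_le_div_of_nonneg_right (integral_abs_condExp_intervalIntegral_mul_le m₀ hh.le
            hD hDK hf hf_int hg hψh) hh.le
      _ = _ := by
          rw [add_div, mul_div_assoc, ← integral_div]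
          simp only [div_mul_eq_mul_div]

theorem stmt_14_general
    {Ω : Type*} {m : MeasurableSpace Ω} (P : Measure Ω) [IsProbabilityMeasure P]
    (ℱ : MeasureTheory.Filtration ℝ m)
    (T : ℝ)
    (μ : ℝ → Ω → ℝ)
    (hμmeas : Measurable (Function.uncurry μ))
    (hμint : ∀ u : ℝ, Integrable (μ u) P)
    (hμL1 : ∀ t ∈ Set.Icc (0:ℝ) T,
      Filter.Tendsto (fun s => ∫ ω, |μ s ω - μ t ω| ∂P) (𝓝[Set.Icc (0:ℝ) T] t) (𝓝 0))
    (H : ℝ → Ω → ℝ)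
    (hHmeas : Measurable (Function.uncurry H))
    (hHcont : ∀ᵐ ω ∂P, ContinuousOn (fun u => H u ω) (Set.Icc 0 T))
    (C : ℝ) (hHbd : ∀ (u : ℝ) (ω : Ω), |H u ω| ≤ C) :
    ∀ t ∈ Set.Ico (0:ℝ) T,
      Filter.Tendsto
        (fun h : ℝ =>
          (∫ ω, |(P[(fun ω' => ∫ u in t..(t + h), (H u ω' - H t ω') * μ u ω') | ℱ t]) ω| ∂P) / h)
        (𝓝[Set.Ioc (0:ℝ) (T - t)] 0) (𝓝 0) := by
  rintro t ⟨ht0, htT⟩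
  have htIcc : t ∈ Icc 0 T := ⟨ht0, htT.le⟩
  have hright : 𝓝[>] t ≤ 𝓝[Icc 0 T] t := nhdsGT_le_nhdsWithin_Icc ht0 htT
  have hΔH : ∀ u ω, |H u ω - H t ω| ≤ 2 * C := fun u ω => by
    linarith [abs_sub (H u ω) (H t ω), hHbd u ω, hHbd t ω]
  have hΔHt : ∀ᵐ ω ∂P, Tendsto (fun u => H u ω - H t ω) (𝓝[>] t) (𝓝 0) := by
    filter_upwards [hHcont] with ω hω
    simpa using ((hω t htIcc).tendsto.mono_left hright).sub_const (H t ω)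
  have hlim := tendsto_integral_abs_condExp_intervalIntegral_mul_div (ℱ t)
    (D := fun u ω => H u ω - H t ω) (hHmeas.sub (hHmeas.of_uncurry_left.comp measurable_snd))
    hΔH hΔHt hμmeas hμint (hμint t) ((hμL1 t htIcc).mono_left hright)
  exact hlim.mono_left (nhdsWithin_mono _ Ioc_subset_Ioi_self)

/-- Mean-sense Fundamental Theorem of Stochastic Calculus, drift part:
for `μ` jointly measurable, adapted, integrable and `L¹`-continuous, and `H` jointly
measurable, adapted, uniformly bounded with a.s. continuous paths, the random variables
`(1/h) E[∫_t^{t+h} (H_u − H_t) μ_u du | ℱ_t]` converge to `0` in `L¹` as `h → 0+`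
(with `t + h ≤ T`), for each `t ∈ [0,T)`. -/
theorem stmt_14
    {Ω : Type*} {m : MeasurableSpace Ω} (P : Measure Ω) [IsProbabilityMeasure P]
    (ℱ : MeasureTheory.Filtration ℝ m)
    (T : ℝ) (hT : 0 < T)
    (μ : ℝ → Ω → ℝ)
    (hμmeas : Measurable (Function.uncurry μ))
    (hμadapted : MeasureTheory.Adapted ℱ μ)
    (hμint : ∀ u : ℝ, Integrable (μ u) P)
    (hμL1 : ∀ t ∈ Set.Icc (0:ℝ) T,
      Filter.Tendsto (fun s => ∫ ω, |μ s ω - μ t ω| ∂P) (𝓝[Set.Icc (0:ℝ) T] t) (𝓝 0))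
    (H : ℝ → Ω → ℝ)
    (hHmeas : Measurable (Function.uncurry H))
    (hHadapted : MeasureTheory.Adapted ℱ H)
    (hHcont : ∀ᵐ ω ∂P, ContinuousOn (fun u => H u ω) (Set.Icc 0 T))
    (C : ℝ) (hHbd : ∀ (u : ℝ) (ω : Ω), |H u ω| ≤ C) :
    ∀ t ∈ Set.Ico (0:ℝ) T,
      Filter.Tendsto
        (fun h : ℝ =>
          (∫ ω, |(P[(fun ω' => ∫ u in t..(t + h), (H u ω' - H t ω') * μ u ω') | ℱ t]) ω| ∂P) / h)
        (𝓝[Set.Ioc (0:ℝ) (T - t)] 0) (𝓝 0) :=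
  stmt_14_general P ℱ T μ hμmeas hμint hμL1 H hHmeas hHcont C hHbd
end
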